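/- For every POVM M and every level m ≥ 2 of the hierarchy, H_m(M) ≥ t(M), i.e., the hierarchy value upper-bounds the critical visibility: if Φ_t(M) is projectively simulable, then t is feasible for H_m(M). -/

import Mathlib

open Matrix BigOperators ComplexOrder

noncomputable section

/-- A POVM: positive semidefinite effects summing to the identity. -/
def IsPOVM (d n : ℕ) (M : Fin n → Matrix (Fin d) (Fin d) ℂ) : Prop :=
  (∀ i, (M i).PosSemidef) ∧ ∑ i, M i = 1

/-- The depolarizing noise map `Φ_t(X) = t X + (1-t) (Tr X / d) I`. -/
def depol (d : ℕ) (t : ℝ) (X : Matrix (Fin d) (Fin d) ℂ) : Matrix (Fin d) (Fin d) ℂ :=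
  (t : ℂ) • X + ((1 - t : ℝ) : ℂ) • ((X.trace / (d : ℂ)) • (1 : Matrix (Fin d) (Fin d) ℂ))

/-- Tensor product of `m` matrices, as a matrix on `(ℂ^d)^{⊗m}`. -/
def tensorPow (d m : ℕ) (Q : Fin m → Matrix (Fin d) (Fin d) ℂ) :
    Matrix (Fin m → Fin d) (Fin m → Fin d) ℂ :=
  fun f g => ∏ a, Q a (f a) (g a)

/-- The permutation operator `V_σ` on `(ℂ^d)^{⊗m}`. -/
def permOp (m d : ℕ) (σ : Equiv.Perm (Fin m)) :
    Matrix (Fin m → Fin d) (Fin m → Fin d) ℂ :=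
  fun f g => if f = g ∘ σ.symm then 1 else 0

/-- Partial trace over the tensor factor `b` of an `m`-partite matrix. -/
def ptraceAt (m d : ℕ) (b : Fin m)
    (M : Matrix (Fin m → Fin d) (Fin m → Fin d) ℂ) :
    Matrix ({a : Fin m // a ≠ b} → Fin d) ({a : Fin m // a ≠ b} → Fin d) ℂ :=
  fun f g => ∑ k : Fin d,
    M (fun a => if h : a = b then k else f ⟨a, h⟩)
      (fun a => if h : a = b then k else g ⟨a, h⟩)

/-- Feasibility of visibility `t` at level `m` of the SDP hierarchy: there exist positive
semidefinite operators `R_{i₁…i_m}` with the correct marginals of `Φ_t(M)` in each slot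
and vanishing swapped partial traces whenever the swapped indices differ. -/
def Feasible (d n m : ℕ) (M : Fin n → Matrix (Fin d) (Fin d) ℂ) (t : ℝ) : Prop :=
  ∃ R : (Fin m → Fin n) → Matrix (Fin m → Fin d) (Fin m → Fin d) ℂ,
    (∀ ι, (R ι).PosSemidef) ∧
    (∀ (j : Fin m) (v : Fin n),
      ∑ ι ∈ Finset.univ.filter (fun ι : Fin m → Fin n => ι j = v), R ι =
        tensorPow d m (fun a => if a = j then depol d t (M v) else 1)) ∧
    (∀ (a b : Fin m) (ι : Fin m → Fin n), a ≠ b → ι a ≠ ι b →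
      ptraceAt m d b (permOp m d (Equiv.swap a b) * R ι) = 0)

/-- The value `H_m(M)` of the level-`m` SDP. (copy) -/
def Hval (d n m : ℕ) (M : Fin n → Matrix (Fin d) (Fin d) ℂ) : ℝ :=
  sSup {t : ℝ | 0 ≤ t ∧ t ≤ 1 ∧ Feasible d n m M t}


/-- A projective measurement. -/
def IsProjMeas (d n : ℕ) (P : Fin n → Matrix (Fin d) (Fin d) ℂ) : Prop :=
  (∀ i, (P i)ᴴ = P i) ∧
  (∀ i j, P i * P j = if i = j then P i else 0) ∧
  ∑ i, P i = 1

/-- Projective simulability. -/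
def Simulable (d n : ℕ) (M : Fin n → Matrix (Fin d) (Fin d) ℂ) : Prop :=
  ∃ (N : ℕ) (p : Fin N → ℝ) (P : Fin N → Fin n → Matrix (Fin d) (Fin d) ℂ),
    (∀ k, 0 ≤ p k) ∧ (∑ k, p k = 1) ∧ (∀ k, IsProjMeas d n (P k)) ∧
    (∀ i, M i = ∑ k, (p k : ℂ) • P k i)

/-!
Decompose `Φ_t(M_i) = ∑ₖ pₖ Pᵏᵢ` into projective measurements and take
`R_ι = ∑ₖ pₖ Pᵏ_{ι₁} ⊗ ⋯ ⊗ Pᵏ_{ι_m}`. A tensor product of orthogonal projections is an orthogonal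
projection, so each `R_ι` is positive semidefinite. Summing over all `ι` with `ι j = v` collapses
every slot but `j` to `∑ᵢ Pᵏᵢ = 1`, which leaves `Φ_t(M_v)` in slot `j`. Tracing out slot `b`
after swapping slots `a` and `b` contracts those two factors into `Pᵏ_{ι b} Pᵏ_{ι a}`, which
vanishes by orthogonality when `ι a ≠ ι b`. So `t` is feasible, and it lies in a set bounded
above by `1` whose supremum is `H_m(M)`.
-/

section TensorPow

variable {d m : ℕ}

lemma tensorPow_apply (Q : Fin m → Matrix (Fin d) (Fin d) ℂ) (f g : Fin m → Fin d) :
    tensorPow d m Q f g = ∏ a, Q a (f a) (g a) := rfl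

lemma tensorPow_mul (Q Q' : Fin m → Matrix (Fin d) (Fin d) ℂ) :
    tensorPow d m Q * tensorPow d m Q' = tensorPow d m (fun a => Q a * Q' a) := by
  ext f g
  simp only [Matrix.mul_apply, tensorPow_apply, Finset.prod_univ_sum, Fintype.piFinset_univ,
    Finset.prod_mul_distrib]

lemma tensorPow_conjTranspose (Q : Fin m → Matrix (Fin d) (Fin d) ℂ) :
    (tensorPow d m Q)ᴴ = tensorPow d m (fun a => (Q a)ᴴ) := by
  ext f g
  simp [tensorPow_apply, conjTranspose_apply]

lemma tensorPow_posSemidef_of_isProj {Q : Fin m → Matrix (Fin d) (Fin d) ℂ}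
    (hherm : ∀ a, (Q a)ᴴ = Q a) (hidem : ∀ a, Q a * Q a = Q a) :
    (tensorPow d m Q).PosSemidef := by
  have hQ : tensorPow d m Q = (tensorPow d m Q)ᴴ * tensorPow d m Q := by
    rw [tensorPow_conjTranspose, tensorPow_mul]
    simp only [hherm, hidem]
  rw [hQ]
  exact posSemidef_conjTranspose_mul_self _

lemma sum_piFinset_tensorPow {ι : Type*} (S : Fin m → Finset ι)
    (Q : Fin m → ι → Matrix (Fin d) (Fin d) ℂ) :
    ∑ x ∈ Fintype.piFinset S, tensorPow d m (fun a => Q a (x a)) =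
      tensorPow d m (fun a => ∑ i ∈ S a, Q a i) := by
  ext f g
  simp only [Matrix.sum_apply, tensorPow_apply, Finset.prod_univ_sum]

lemma tensorPow_ite_apply (j : Fin m) (X : Matrix (Fin d) (Fin d) ℂ)
    (Q : Fin m → Matrix (Fin d) (Fin d) ℂ) (f g : Fin m → Fin d) :
    tensorPow d m (fun a => if a = j then X else Q a) f g =
      X (f j) (g j) * ∏ a : {a // a ≠ j}, Q a (f a) (g a) := by
  rw [tensorPow_apply, Fintype.prod_eq_mul_prod_subtype_ne _ j, if_pos rfl]
  congr 1
  exact Fintype.prod_congr _ _ fun a => by rw [if_neg a.2]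

lemma sum_smul_tensorPow_ite {κ : Type*} (s : Finset κ) (j : Fin m) (c : κ → ℂ)
    (X : κ → Matrix (Fin d) (Fin d) ℂ) (Q : Fin m → Matrix (Fin d) (Fin d) ℂ) :
    ∑ k ∈ s, c k • tensorPow d m (fun a => if a = j then X k else Q a) =
      tensorPow d m (fun a => if a = j then ∑ k ∈ s, c k • X k else Q a) := by
  ext f g
  simp only [Matrix.sum_apply, Matrix.smul_apply, tensorPow_ite_apply, smul_eq_mul,
    Finset.sum_mul, mul_assoc]

lemma sum_filter_tensorPow_of_sum_eq_one {n : ℕ} {P : Fin n → Matrix (Fin d) (Fin d) ℂ}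
    (hP : ∑ i, P i = 1) (j : Fin m) (v : Fin n) :
    ∑ ι ∈ Finset.univ.filter (fun ι : Fin m → Fin n => ι j = v),
        tensorPow d m (fun a => P (ι a)) =
      tensorPow d m (fun a => if a = j then P v else 1) := by
  have hfilter : Finset.univ.filter (fun ι : Fin m → Fin n => ι j = v) =
      Fintype.piFinset (Function.update (fun _ => (Finset.univ : Finset (Fin n))) j {v}) := by
    rw [Fintype.piFinset_update_singleton_eq_filter_piFinset_eq _ j (Finset.mem_univ v),
      Fintype.piFinset_univ]
  rw [hfilter, sum_piFinset_tensorPow]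
  congr 1
  ext1 a
  by_cases ha : a = j
  · simp [ha]
  · simp [ha, hP]

end TensorPow

lemma permOp_mul_apply {m d : ℕ} (σ : Equiv.Perm (Fin m))
    (N : Matrix (Fin m → Fin d) (Fin m → Fin d) ℂ) (f g : Fin m → Fin d) :
    (permOp m d σ * N) f g = N (f ∘ σ) g := by
  simp only [Matrix.mul_apply, permOp, Equiv.eq_comp_symm, ite_mul, one_mul, zero_mul,
    Finset.sum_ite_eq, Finset.mem_univ, if_true]

section PartialTrace

variable {m d : ℕ}

lemma ptraceAt_sum {κ : Type*} (b : Fin m) (s : Finset κ)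
    (A : κ → Matrix (Fin m → Fin d) (Fin m → Fin d) ℂ) :
    ptraceAt m d b (∑ k ∈ s, A k) = ∑ k ∈ s, ptraceAt m d b (A k) := by
  ext f g
  simp only [ptraceAt, Matrix.sum_apply]
  exact Finset.sum_comm

lemma ptraceAt_smul (b : Fin m) (c : ℂ) (A : Matrix (Fin m → Fin d) (Fin m → Fin d) ℂ) :
    ptraceAt m d b (c • A) = c • ptraceAt m d b A := by
  ext f g
  simp only [ptraceAt, Matrix.smul_apply, smul_eq_mul, Finset.mul_sum]

lemma ptraceAt_permOp_swap_mul_tensorPow_apply {a b : Fin m} (hab : a ≠ b)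
    (Q : Fin m → Matrix (Fin d) (Fin d) ℂ) (f g : {c // c ≠ b} → Fin d) :
    ptraceAt m d b (permOp m d (Equiv.swap a b) * tensorPow d m Q) f g =
      (Q b * Q a) (f ⟨a, hab⟩) (g ⟨a, hab⟩) *
        ∏ c : {c : {c // c ≠ b} // c ≠ ⟨a, hab⟩}, Q c (f c) (g c) := by
  simp only [ptraceAt, permOp_mul_apply]
  simp only [tensorPow_apply, Matrix.mul_apply, Finset.sum_mul]
  refine Fintype.sum_congr _ _ fun k => ?_
  rw [Fintype.prod_eq_mul_prod_subtype_ne _ b, Fintype.prod_eq_mul_prod_subtype_ne _ ⟨a, hab⟩]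
  have hc (c : {c : {c // c ≠ b} // c ≠ ⟨a, hab⟩}) : c.1.1 ≠ a := fun h => c.2 (Subtype.ext h)
  simp only [Function.comp_apply, Equiv.swap_apply_left, Equiv.swap_apply_right, dite_true,
    dif_neg hab, ← mul_assoc]
  congr 1
  refine Finset.prod_congr rfl fun c _ => ?_
  simp only [Equiv.swap_apply_of_ne_of_ne (hc c) c.1.2, dif_neg c.1.2]

lemma ptraceAt_permOp_swap_mul_tensorPow_eq_zero {a b : Fin m} (hab : a ≠ b)
    {Q : Fin m → Matrix (Fin d) (Fin d) ℂ} (hQ : Q b * Q a = 0) :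
    ptraceAt m d b (permOp m d (Equiv.swap a b) * tensorPow d m Q) = 0 := by
  ext f g
  rw [ptraceAt_permOp_swap_mul_tensorPow_apply hab, hQ, Matrix.zero_apply, zero_mul,
    Matrix.zero_apply]

end PartialTrace

section TensorLift

variable {d m n : ℕ} {κ : Type*} [Fintype κ]

def tensorLift (d m : ℕ) (p : κ → ℝ) (P : κ → Fin n → Matrix (Fin d) (Fin d) ℂ)
    (ι : Fin m → Fin n) : Matrix (Fin m → Fin d) (Fin m → Fin d) ℂ :=
  ∑ k, (p k : ℂ) • tensorPow d m (fun a => P k (ι a))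

variable {p : κ → ℝ} {P : κ → Fin n → Matrix (Fin d) (Fin d) ℂ}

lemma tensorLift_posSemidef (hp : ∀ k, 0 ≤ p k) (hP : ∀ k, IsProjMeas d n (P k))
    (ι : Fin m → Fin n) : (tensorLift d m p P ι).PosSemidef := by
  refine posSemidef_sum _ fun k _ => PosSemidef.smul ?_ (Complex.zero_le_real.2 (hp k))
  refine tensorPow_posSemidef_of_isProj (fun a => (hP k).1 _) fun a => ?_
  simpa using (hP k).2.1 (ι a) (ι a)

lemma sum_filter_tensorLift (hP : ∀ k, IsProjMeas d n (P k)) (j : Fin m) (v : Fin n) :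
    ∑ ι ∈ Finset.univ.filter (fun ι : Fin m → Fin n => ι j = v), tensorLift d m p P ι =
      tensorPow d m (fun a => if a = j then ∑ k, (p k : ℂ) • P k v else 1) := by
  simp only [tensorLift]
  rw [Finset.sum_comm, ← sum_smul_tensorPow_ite]
  refine Finset.sum_congr rfl fun k _ => ?_
  rw [← Finset.smul_sum, sum_filter_tensorPow_of_sum_eq_one (hP k).2.2]

lemma ptraceAt_permOp_swap_mul_tensorLift_eq_zero (hP : ∀ k, IsProjMeas d n (P k))
    {a b : Fin m} (hab : a ≠ b) {ι : Fin m → Fin n} (hι : ι a ≠ ι b) :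
    ptraceAt m d b (permOp m d (Equiv.swap a b) * tensorLift d m p P ι) = 0 := by
  rw [tensorLift, Matrix.mul_sum, ptraceAt_sum]
  refine Finset.sum_eq_zero fun k _ => ?_
  rw [Matrix.mul_smul, ptraceAt_smul, ptraceAt_permOp_swap_mul_tensorPow_eq_zero hab, smul_zero]
  rw [(hP k).2.1, if_neg hι.symm]

end TensorLift

lemma feasible_of_simulable_depol {d n m : ℕ} {M : Fin n → Matrix (Fin d) (Fin d) ℂ} {t : ℝ}
    (hsim : Simulable d n (fun i => depol d t (M i))) : Feasible d n m M t := by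
  obtain ⟨N, p, P, hp, -, hP, hdecomp⟩ := hsim
  refine ⟨tensorLift d m p P, tensorLift_posSemidef hp hP, fun j v => ?_,
    fun a b ι hab hι => ptraceAt_permOp_swap_mul_tensorLift_eq_zero hP hab hι⟩
  rw [sum_filter_tensorLift hP, ← hdecomp v]

lemma le_Hval_of_feasible {d n m : ℕ} {M : Fin n → Matrix (Fin d) (Fin d) ℂ} {t : ℝ}
    (ht0 : 0 ≤ t) (ht1 : t ≤ 1) (hfeas : Feasible d n m M t) : t ≤ Hval d n m M :=
  le_csSup ⟨1, fun _ hs => hs.2.1⟩ ⟨ht0, ht1, hfeas⟩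

theorem hierarchy_upper_bounds_visibility_general (d n m : ℕ)
    (M : Fin n → Matrix (Fin d) (Fin d) ℂ)
    (t : ℝ) (ht0 : 0 ≤ t) (ht1 : t ≤ 1)
    (hsim : Simulable d n (fun i => depol d t (M i))) :
    Feasible d n m M t ∧ t ≤ Hval d n m M :=
  have hfeas := feasible_of_simulable_depol hsim
  ⟨hfeas, le_Hval_of_feasible ht0 ht1 hfeas⟩

/-- The hierarchy upper-bounds the critical visibility: if `Φ_t(M)` is projectively
simulable, then `t` is feasible for `H_m(M)`, and hence `t ≤ H_m(M)`. -/
theorem hierarchy_upper_bounds_visibility (d n m : ℕ) (hm : 2 ≤ m)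
    (M : Fin n → Matrix (Fin d) (Fin d) ℂ) (hM : IsPOVM d n M)
    (t : ℝ) (ht0 : 0 ≤ t) (ht1 : t ≤ 1)
    (hsim : Simulable d n (fun i => depol d t (M i))) :
    Feasible d n m M t ∧ t ≤ Hval d n m M :=
  hierarchy_upper_bounds_visibility_general d n m M t ht0 ht1 hsim
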